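/- The Halfer measure P_L, defined by P_L(F ∩ {𝒳 = B} ∩ {S = x}) = |B|^{-1} P(F ∩ {𝒳 = B} | 𝒳 ≠ ∅) for x ∈ B and = 0 for x ∉ B, is the unique probability on (Ω, ℱ) satisfying (PN), (PP), and the strengthened indifference principle: P_A(S = x | F ∩ {𝒳 = B}) = |B|^{-1} for all x ∈ B and objective F with P_A(F ∩ {𝒳 = B}) > 0. -/

import Mathlib

open scoped Classical
open Finset

/-- Probability of a set under a weight function on a finite type. -/
noncomputable def pr {α : Type*} [Fintype α] (μ : α → ℝ) (A : Set α) : ℝ :=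
  ∑ a : α, if a ∈ A then μ a else 0

/-- Conditional probability. -/
noncomputable def cpr {α : Type*} [Fintype α] (μ : α → ℝ) (A B : Set α) : ℝ :=
  pr μ (A ∩ B) / pr μ B

/-- Expectation. -/
noncomputable def ex {α : Type*} [Fintype α] (μ : α → ℝ) (f : α → ℝ) : ℝ :=
  ∑ a : α, μ a * f a

/-- A probability weight: nonnegative and summing to one. -/
def IsProb {α : Type*} [Fintype α] (μ : α → ℝ) : Prop :=
  (∀ a, 0 ≤ μ a) ∧ ∑ a : α, μ a = 1

/-!
Each axiom pins down the weights of single outcomes. (PN) forces the weight to vanish off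
`{S ∈ 𝒳}`; (PP) for `F = {o}` gives the slice `{o} × Option K` the mass `P0 o / P(𝒳 ≠ ∅)`; and
indifference with `F = {o}`, `B = 𝒳 o` splits that mass equally among the `|𝒳 o|` locations in
`𝒳 o` (trivially so when the slice is null). So every admissible `P_A` is the explicit weight
`halferWeight`. The defining equations of `P_L` give the same values at the outcomes
`(o, some x)`, and since both have total mass one, `P_L` also vanishes at `∂`.
-/

section Pr

variable {α : Type*} [Fintype α]

lemma pr_singleton (μ : α → ℝ) (a : α) : pr μ {a} = μ a := by
  simp [pr]

lemma pr_congr {μ ν : α → ℝ} {A : Set α} (h : ∀ a ∈ A, μ a = ν a) : pr μ A = pr ν A :=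
  Finset.sum_congr rfl fun a _ => by split_ifs with ha; exacts [h a ha, rfl]

lemma pr_const_mul (c : ℝ) (μ : α → ℝ) (A : Set α) :
    pr (fun a => c * μ a) A = c * pr μ A := by
  simp only [pr, Finset.mul_sum, mul_ite, mul_zero]

lemma pr_nonneg {μ : α → ℝ} (hμ : ∀ a, 0 ≤ μ a) (A : Set α) : 0 ≤ pr μ A :=
  Finset.sum_nonneg fun a _ => by split_ifs <;> simp [hμ a]

lemma pr_mono {μ : α → ℝ} (hμ : ∀ a, 0 ≤ μ a) {A B : Set α} (h : A ⊆ B) : pr μ A ≤ pr μ B :=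
  Finset.sum_le_sum fun a _ => by
    by_cases ha : a ∈ A
    · simp [ha, h ha]
    · split_ifs <;> simp [hμ a]

lemma pr_add_pr_compl (μ : α → ℝ) (A : Set α) : pr μ A + pr μ Aᶜ = ∑ a, μ a := by
  rw [pr, pr, ← Finset.sum_add_distrib]
  exact Finset.sum_congr rfl fun a _ => by by_cases ha : a ∈ A <;> simp [ha]

lemma pr_eq_sum_of_forall_notMem {μ : α → ℝ} {A : Set α} (h : ∀ a ∉ A, μ a = 0) :
    pr μ A = ∑ a, μ a :=
  Finset.sum_congr rfl fun a _ => by by_cases ha : a ∈ A <;> simp [ha, h]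

lemma eq_zero_of_pr_eq_zero {μ : α → ℝ} (hμ : ∀ a, 0 ≤ μ a) {A : Set α} (hA : pr μ A = 0)
    {a : α} (ha : a ∈ A) : μ a = 0 := by
  have := (Finset.sum_eq_zero_iff_of_nonneg fun b _ => by
    split_ifs <;> simp [hμ b]).mp hA a (Finset.mem_univ a)
  simpa [ha] using this

lemma eq_zero_of_pr_eq_one {μ : α → ℝ} (hμ : IsProb μ) {A : Set α} (hA : pr μ A = 1)
    {a : α} (ha : a ∉ A) : μ a = 0 :=
  eq_zero_of_pr_eq_zero hμ.1 (A := Aᶜ) (by linarith [pr_add_pr_compl μ A, hμ.2]) ha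

lemma eq_of_eqOn_of_sum_eq_one {μ ν : α → ℝ} (hμ : IsProb μ) (hν : ∑ a, ν a = 1) {A : Set α}
    (hA : ∀ a ∈ A, μ a = ν a) (hνA : ∀ a ∉ A, ν a = 0) : μ = ν := by
  have hμA : pr μ A = 1 := by rw [pr_congr hA, pr_eq_sum_of_forall_notMem hνA, hν]
  funext a
  by_cases ha : a ∈ A
  · exact hA a ha
  · rw [hνA a ha, eq_zero_of_pr_eq_one hμ hμA ha]

lemma pr_inter_eq_mul_of_cpr {μ : α → ℝ} (hμ : ∀ a, 0 ≤ μ a) {A B : Set α} {c : ℝ}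
    (h : 0 < pr μ B → cpr μ A B = c) : pr μ (A ∩ B) = c * pr μ B := by
  rcases (pr_nonneg hμ B).eq_or_lt with hB | hB
  · rw [← hB, mul_zero]
    exact le_antisymm (hB ▸ pr_mono hμ Set.inter_subset_right) (pr_nonneg hμ _)
  · rw [← h hB, cpr, div_mul_cancel₀ _ hB.ne']

end Pr

lemma singleton_inter_fiber {α β : Type*} (f : α → β) (a : α) : {a} ∩ {a' | f a' = f a} = {a} :=
  Set.inter_eq_left.mpr fun _ h => congrArg f h

section Product

variable {β γ : Type*} [Fintype β] [Fintype γ]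

lemma pr_fst_mem (μ : β × γ → ℝ) (E : Set β) :
    pr μ {ω | ω.1 ∈ E} = pr (fun b => ∑ c, μ (b, c)) E := by
  simp only [pr, Fintype.sum_prod_type, Set.mem_ofPred_eq]
  exact Finset.sum_congr rfl fun b _ => by split_ifs <;> simp

lemma pr_snd_eq_inter_fst_mem (μ : β × γ → ℝ) (c : γ) (E : Set β) :
    pr μ ({ω | ω.2 = c} ∩ {ω | ω.1 ∈ E}) = pr (fun b => μ (b, c)) E := by
  simp only [pr, Fintype.sum_prod_type, Set.mem_inter_iff, Set.mem_ofPred_eq]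
  exact Finset.sum_congr rfl fun b _ => by by_cases hb : b ∈ E <;> simp [hb]

end Product

section Halfer

variable {Ω₀ K : Type*} [Fintype Ω₀] (P0 : Ω₀ → ℝ) (𝒳 : Ω₀ → Finset K)

-- The event `S ∈ 𝒳` of (PN); the location `∂` is encoded as `none`.
def awakeEvent : Set (Ω₀ × Option K) := {ω | ∃ x : K, ω.2 = some x ∧ x ∈ 𝒳 ω.1}

noncomputable def halferWeight : Ω₀ × Option K → ℝ
  | (_, none) => 0
  | (o, some x) => if x ∈ 𝒳 o then ((𝒳 o).card : ℝ)⁻¹ * (P0 o / pr P0 {o | 𝒳 o ≠ ∅}) else 0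

lemma cpr_singleton_nonempty {o : Ω₀} (ho : 𝒳 o ≠ ∅) :
    cpr P0 {o} {o | 𝒳 o ≠ ∅} = P0 o / pr P0 {o | 𝒳 o ≠ ∅} := by
  rw [cpr, Set.singleton_inter_of_mem ho, pr_singleton]

lemma halferWeight_eq_zero_of_notMem {ω : Ω₀ × Option K} (hω : ω ∉ awakeEvent 𝒳) :
    halferWeight P0 𝒳 ω = 0 := by
  obtain ⟨o, _ | x⟩ := ω
  · rfl
  · simp_all [awakeEvent, halferWeight]

variable [Fintype K]

lemma sum_halferWeight_slice (o : Ω₀) :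
    ∑ b, halferWeight P0 𝒳 (o, b) = if 𝒳 o = ∅ then 0 else P0 o / pr P0 {o | 𝒳 o ≠ ∅} := by
  rw [Fintype.sum_option]
  simp only [halferWeight, zero_add]
  rw [Finset.sum_ite_mem, Finset.univ_inter, Finset.sum_const, nsmul_eq_mul]
  split_ifs with ho
  · simp [ho]
  · rw [← mul_assoc, mul_inv_cancel₀ (by simpa using ho), one_mul]

lemma halferWeight_some_eq_mul_sum {o : Ω₀} {x : K} (hx : x ∈ 𝒳 o) :
    halferWeight P0 𝒳 (o, some x) = ((𝒳 o).card : ℝ)⁻¹ * ∑ b, halferWeight P0 𝒳 (o, b) := by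
  rw [sum_halferWeight_slice, if_neg (Finset.ne_empty_of_mem hx)]
  simp [halferWeight, hx]

lemma pr_fst_mem_halferWeight (F : Set Ω₀) :
    pr (halferWeight P0 𝒳) {ω | ω.1 ∈ F} = cpr P0 F {o | 𝒳 o ≠ ∅} := by
  rw [pr_fst_mem, cpr, pr, pr, Finset.sum_div]
  refine Finset.sum_congr rfl fun o _ => ?_
  rw [sum_halferWeight_slice]
  by_cases hF : o ∈ F <;> by_cases ho : 𝒳 o = ∅ <;> simp [hF, ho]

lemma pr_fst_mem_halferWeight_eq_zero (hP0 : ∀ o, 0 ≤ P0 o) {F : Set Ω₀} (hF : pr P0 F = 0) :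
    pr (halferWeight P0 𝒳) {ω | ω.1 ∈ F} = 0 := by
  rw [pr_fst_mem_halferWeight, cpr,
    le_antisymm (hF ▸ pr_mono hP0 Set.inter_subset_left) (pr_nonneg hP0 _), zero_div]

variable {P0} in
lemma sum_halferWeight (hZ : pr P0 {o | 𝒳 o ≠ ∅} ≠ 0) : ∑ ω, halferWeight P0 𝒳 ω = 1 := by
  rw [← pr_eq_sum_of_forall_notMem (A := {ω : Ω₀ × Option K | ω.1 ∈ Set.univ})
      fun ω hω => absurd (Set.mem_univ ω.1) hω,
    pr_fst_mem_halferWeight, cpr, Set.univ_inter, div_self hZ]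

variable {P0} in
lemma pr_awakeEvent_halferWeight (hZ : pr P0 {o | 𝒳 o ≠ ∅} ≠ 0) :
    pr (halferWeight P0 𝒳) (awakeEvent 𝒳) = 1 := by
  rw [pr_eq_sum_of_forall_notMem fun _ => halferWeight_eq_zero_of_notMem P0 𝒳,
    sum_halferWeight 𝒳 hZ]

lemma cpr_halferWeight_some {x : K} {B : Finset K} {F : Set Ω₀} (hx : x ∈ B)
    (hpos : 0 < pr (halferWeight P0 𝒳) ({ω | ω.1 ∈ F} ∩ {ω | 𝒳 ω.1 = B})) :
    cpr (halferWeight P0 𝒳) {ω | ω.2 = some x} ({ω | ω.1 ∈ F} ∩ {ω | 𝒳 ω.1 = B})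
      = (B.card : ℝ)⁻¹ := by
  have hnum : pr (halferWeight P0 𝒳) ({ω | ω.2 = some x} ∩ {ω | ω.1 ∈ F ∩ {o | 𝒳 o = B}})
      = (B.card : ℝ)⁻¹ * pr (halferWeight P0 𝒳) {ω | ω.1 ∈ F ∩ {o | 𝒳 o = B}} := by
    rw [pr_snd_eq_inter_fst_mem, pr_fst_mem, ← pr_const_mul]
    exact pr_congr fun o ho => ho.2 ▸ halferWeight_some_eq_mul_sum P0 𝒳 (ho.2 ▸ hx)
  exact (div_eq_iff hpos.ne').mpr hnum

variable {P0 𝒳} in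
lemma eq_halferWeight_of_slices [DecidableEq K] {PL : Ω₀ × Option K → ℝ} (hPL : IsProb PL)
    (hZ : pr P0 {o | 𝒳 o ≠ ∅} ≠ 0)
    (hslices : ∀ (F : Set Ω₀) (B : Finset K) (x : K),
      pr PL ({ω | ω.1 ∈ F} ∩ {ω | 𝒳 ω.1 = B} ∩ {ω | ω.2 = some x})
        = if x ∈ B then (B.card : ℝ)⁻¹ * cpr P0 (F ∩ {o | 𝒳 o = B}) {o | 𝒳 o ≠ ∅} else 0) :
    PL = halferWeight P0 𝒳 := by
  refine eq_of_eqOn_of_sum_eq_one hPL (sum_halferWeight 𝒳 hZ) ?_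
    fun _ => halferWeight_eq_zero_of_notMem P0 𝒳
  rintro ⟨o, _⟩ ⟨x, rfl, hx⟩
  have h := hslices {o} (𝒳 o) x
  rw [Set.inter_comm] at h
  change pr PL ({ω | ω.2 = some x} ∩ {ω | ω.1 ∈ {o} ∩ {o' | 𝒳 o' = 𝒳 o}}) = _ at h
  rw [singleton_inter_fiber, pr_snd_eq_inter_fst_mem, pr_singleton, if_pos hx,
    cpr_singleton_nonempty P0 𝒳 (Finset.ne_empty_of_mem hx)] at h
  rw [h, halferWeight, if_pos hx]

variable {P0 𝒳} in
lemma eq_halferWeight_of_indifference {PA : Ω₀ × Option K → ℝ} (hPA : IsProb PA)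
    (hawake : pr PA (awakeEvent 𝒳) = 1)
    (hPP : ∀ F : Set Ω₀, pr PA {ω | ω.1 ∈ F} = cpr P0 F {o | 𝒳 o ≠ ∅})
    (hind : ∀ (x : K) (B : Finset K) (F : Set Ω₀), x ∈ B →
      0 < pr PA ({ω | ω.1 ∈ F} ∩ {ω | 𝒳 ω.1 = B}) →
      cpr PA {ω | ω.2 = some x} ({ω | ω.1 ∈ F} ∩ {ω | 𝒳 ω.1 = B}) = (B.card : ℝ)⁻¹) :
    PA = halferWeight P0 𝒳 := by
  funext ω
  by_cases hω : ω ∈ awakeEvent 𝒳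
  swap
  · rw [eq_zero_of_pr_eq_one hPA hawake hω, halferWeight_eq_zero_of_notMem P0 𝒳 hω]
  obtain ⟨o, _⟩ := ω
  obtain ⟨x, rfl, hx⟩ := hω
  have h := pr_inter_eq_mul_of_cpr hPA.1 (hind x (𝒳 o) {o} hx)
  change pr PA ({ω | ω.2 = some x} ∩ {ω | ω.1 ∈ {o} ∩ {o' | 𝒳 o' = 𝒳 o}})
    = _ * pr PA {ω | ω.1 ∈ {o} ∩ {o' | 𝒳 o' = 𝒳 o}} at h
  rw [singleton_inter_fiber, pr_snd_eq_inter_fst_mem, pr_singleton, hPP,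
    cpr_singleton_nonempty P0 𝒳 (Finset.ne_empty_of_mem hx)] at h
  rw [h, halferWeight, if_pos hx]

end Halfer

/-- Proposition: the Halfer measure `P_L`, defined by
`P_L(F ∩ {𝒳 = B} ∩ {S = x}) = |B|⁻¹ P(F ∩ {𝒳 = B} | 𝒳 ≠ ∅)` for `x ∈ B` and
`0` for `x ∉ B`, satisfies (PN), (PP) and the strengthened indifference
principle, and it is the unique probability on `(Ω, ℱ)` with these properties. -/
theorem stmt6 {Ω₀ K : Type*} [Fintype Ω₀] [Fintype K] [DecidableEq K]
    (P0 : Ω₀ → ℝ) (𝒳 : Ω₀ → Finset K)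
    (hP0 : IsProb P0)
    (hne : pr P0 {o | 𝒳 o = ∅} < 1)
    (PL : Ω₀ × Option K → ℝ) (hPLprob : IsProb PL)
    (hPLdef : ∀ (F : Set Ω₀) (B : Finset K) (x : K),
      pr PL ({ω | ω.1 ∈ F} ∩ {ω | 𝒳 ω.1 = B} ∩ {ω | ω.2 = some x})
        = if x ∈ B then (B.card : ℝ)⁻¹ * cpr P0 (F ∩ {o | 𝒳 o = B}) {o | 𝒳 o ≠ ∅}
          else 0) :
    -- P_L satisfies (PN)
    ((∀ F : Set Ω₀, pr P0 F = 0 → pr PL {ω | ω.1 ∈ F} = 0) ∧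
      pr PL {ω | ∃ x : K, ω.2 = some x ∧ x ∈ 𝒳 ω.1} = 1) ∧
    -- P_L satisfies (PP)
    (∀ F : Set Ω₀, pr PL {ω | ω.1 ∈ F} = cpr P0 F {o | 𝒳 o ≠ ∅}) ∧
    -- P_L satisfies the strengthened principle of indifference
    (∀ (x : K) (B : Finset K) (F : Set Ω₀), x ∈ B →
      0 < pr PL ({ω | ω.1 ∈ F} ∩ {ω | 𝒳 ω.1 = B}) →
      cpr PL {ω | ω.2 = some x} ({ω | ω.1 ∈ F} ∩ {ω | 𝒳 ω.1 = B}) = (B.card : ℝ)⁻¹) ∧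
    -- uniqueness: any probability with these three properties agrees with P_L
    (∀ PA : Ω₀ × Option K → ℝ, IsProb PA →
      ((∀ F : Set Ω₀, pr P0 F = 0 → pr PA {ω | ω.1 ∈ F} = 0) ∧
        pr PA {ω | ∃ x : K, ω.2 = some x ∧ x ∈ 𝒳 ω.1} = 1) →
      (∀ F : Set Ω₀, pr PA {ω | ω.1 ∈ F} = cpr P0 F {o | 𝒳 o ≠ ∅}) →
      (∀ (x : K) (B : Finset K) (F : Set Ω₀), x ∈ B →
        0 < pr PA ({ω | ω.1 ∈ F} ∩ {ω | 𝒳 ω.1 = B}) →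
        cpr PA {ω | ω.2 = some x} ({ω | ω.1 ∈ F} ∩ {ω | 𝒳 ω.1 = B}) = (B.card : ℝ)⁻¹) →
      ∀ G : Set (Ω₀ × Option K), pr PA G = pr PL G) := by
  have hZ : pr P0 {o | 𝒳 o ≠ ∅} ≠ 0 := by
    have h := pr_add_pr_compl P0 {o | 𝒳 o = ∅}
    rw [hP0.2] at h
    change _ + pr P0 {o | 𝒳 o ≠ ∅} = 1 at h
    exact (show 0 < pr P0 {o | 𝒳 o ≠ ∅} by linarith).ne'
  obtain rfl := eq_halferWeight_of_slices hPLprob hZ hPLdef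
  refine ⟨⟨fun F => pr_fst_mem_halferWeight_eq_zero P0 𝒳 hP0.1, pr_awakeEvent_halferWeight 𝒳 hZ⟩,
    pr_fst_mem_halferWeight P0 𝒳, fun _ _ _ => cpr_halferWeight_some P0 𝒳, ?_⟩
  rintro PA hPA ⟨-, hawake⟩ hPP hind G
  rw [eq_halferWeight_of_indifference hPA hawake hPP hind]
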